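/- arXiv:2109.13867 — 2 statements merged into one kernel-verified Lean document; each statement's English description precedes it below -/
import Mathlib

section
/- Let (X,c) be a Čech closure space. Consider the poset of all subsets of X as a category (with morphisms given by inclusions), in which pullbacks exist and are given by intersections. Then the assignment K sending each subset U ⊆ X to the collection K(U) of all i-covers of U (viewed as families of inclusion morphisms U_α ⟶ U) satisfies the axioms of a basis for a Grothendieck topology (a pretopology): (i) the singleton family {U ⟶ U} belongs to K(U); (ii) if {U_α}_{α ∈ A} ∈ K(U) and V ⊆ U, then the family of pullbacks {U_α ∩ V}_{α ∈ A} belongs to K(V); (iii) if {U_α}_{α ∈ A} ∈ K(U) and for each α the family {V_{βα}}_{β ∈ B_α} belongs to K(U_α), then the composite family {V_{βα} | α ∈ A, β ∈ B_α} belongs to K(U). -/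
/-!
Additivity of `c` makes the interior operator preserve binary intersections, so intersecting an
`i`-cover of `U` with `V ⊆ U` intersects both of its defining unions with `V`, resp. `i(V)`, and
`i(V) ⊆ i(U)`. Composition of covers is just reassociation of the two unions.
-/

/-- The interior operator of a Čech closure operator `c`: `i(A) := X \ c(X \ A)`. -/
def cInterior {X : Type*} (c : Set X → Set X) (A : Set X) : Set X := (c Aᶜ)ᶜ

/-- An `i`-cover of a subset `U` of a Čech closure space `(X, c)`, given as a
collection `𝒰` of subsets of `U` (i.e., a family of inclusion morphisms into `U`
in the poset category of subsets of `X`): the union of `𝒰` is `U` and the union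
of the interiors of members of `𝒰` (computed in `X`) is the interior of `U`. -/
def IsICoverS {X : Type*} (c : Set X → Set X) (U : Set X) (𝒰 : Set (Set X)) : Prop :=
  (∀ W ∈ 𝒰, W ⊆ U) ∧ ⋃₀ 𝒰 = U ∧ (⋃ W ∈ 𝒰, cInterior c W) = cInterior c U

open Set

section

variable {X : Type*} {c : Set X → Set X}

lemma cInterior_inter (hc_union : ∀ A B : Set X, c (A ∪ B) = c A ∪ c B) (A B : Set X) :
    cInterior c (A ∩ B) = cInterior c A ∩ cInterior c B := by
  simp only [cInterior, compl_inter, hc_union, compl_union]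

lemma cInterior_mono (hc_union : ∀ A B : Set X, c (A ∪ B) = c A ∪ c B) :
    Monotone (cInterior c) := fun A B hAB =>
  calc cInterior c A = cInterior c (A ∩ B) := by rw [inter_eq_left.mpr hAB]
    _ = cInterior c A ∩ cInterior c B := cInterior_inter hc_union A B
    _ ⊆ cInterior c B := inter_subset_right

lemma isICoverS_singleton (U : Set X) : IsICoverS c U {U} := by
  simp [IsICoverS]

lemma IsICoverS.inter_of_subset (hc_union : ∀ A B : Set X, c (A ∪ B) = c A ∪ c B)
    {U V : Set X} {𝒰 : Set (Set X)} (h : IsICoverS c U 𝒰) (hVU : V ⊆ U) :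
    IsICoverS c V ((fun W => W ∩ V) '' 𝒰) := by
  obtain ⟨-, hunion, hinterior⟩ := h
  refine ⟨?_, ?_, ?_⟩
  · rintro _ ⟨W, -, rfl⟩
    exact inter_subset_right
  · rw [sUnion_image, ← iUnion₂_inter, ← sUnion_eq_biUnion, hunion, inter_eq_right.mpr hVU]
  · calc ⋃ W ∈ (fun W => W ∩ V) '' 𝒰, cInterior c W
        = ⋃ W ∈ 𝒰, cInterior c W ∩ cInterior c V := by
          simp only [biUnion_image, cInterior_inter hc_union]
      _ = cInterior c U ∩ cInterior c V := by rw [← iUnion₂_inter, hinterior]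
      _ = cInterior c V := inter_eq_right.mpr (cInterior_mono hc_union hVU)

lemma IsICoverS.biUnion {U : Set X} {𝒰 : Set (Set X)} {𝒱 : Set X → Set (Set X)}
    (h : IsICoverS c U 𝒰) (h𝒱 : ∀ W ∈ 𝒰, IsICoverS c W (𝒱 W)) :
    IsICoverS c U (⋃ W ∈ 𝒰, 𝒱 W) := by
  obtain ⟨hsub, hunion, hinterior⟩ := h
  refine ⟨?_, ?_, ?_⟩
  · simp only [mem_iUnion₂]
    rintro W' ⟨W, hW, hW'⟩
    exact ((h𝒱 W hW).1 W' hW').trans (hsub W hW)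
  · calc ⋃₀ ⋃ W ∈ 𝒰, 𝒱 W = ⋃ W ∈ 𝒰, ⋃₀ 𝒱 W := by simp only [sUnion_iUnion]
      _ = ⋃ W ∈ 𝒰, W := iUnion₂_congr fun W hW => (h𝒱 W hW).2.1
      _ = U := by rw [← sUnion_eq_biUnion, hunion]
  · calc ⋃ W' ∈ ⋃ W ∈ 𝒰, 𝒱 W, cInterior c W'
        = ⋃ W ∈ 𝒰, ⋃ W' ∈ 𝒱 W, cInterior c W' := by simp only [biUnion_iUnion]
      _ = ⋃ W ∈ 𝒰, cInterior c W := iUnion₂_congr fun W hW => (h𝒱 W hW).2.2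
      _ = cInterior c U := hinterior

end

theorem iCovers_pretopology_general {X : Type*} (c : Set X → Set X)
    (hc_union : ∀ A B : Set X, c (A ∪ B) = c A ∪ c B) :
    (∀ U : Set X, IsICoverS c U {U}) ∧
    (∀ (U V : Set X) (𝒰 : Set (Set X)), IsICoverS c U 𝒰 → V ⊆ U →
      IsICoverS c V ((fun W => W ∩ V) '' 𝒰)) ∧
    (∀ (U : Set X) (𝒰 : Set (Set X)) (𝒱 : Set X → Set (Set X)),
      IsICoverS c U 𝒰 → (∀ W ∈ 𝒰, IsICoverS c W (𝒱 W)) →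
      IsICoverS c U (⋃ W ∈ 𝒰, 𝒱 W)) :=
  ⟨isICoverS_singleton,
    fun _ _ _ h hVU => h.inter_of_subset hc_union hVU,
    fun _ _ _ h h𝒱 => h.biUnion h𝒱⟩

/-- The assignment `K(U) := { 𝒰 | 𝒰 is an i-cover of U }` is a basis for a Grothendieck
topology (a pretopology) on the poset category of subsets of `X`, where pullbacks are
given by intersections:
(i) the singleton family `{U ⟶ U}` is in `K(U)`;
(ii) `K` is stable under pullback along any morphism `V ⟶ U` (i.e., `V ⊆ U`);
(iii) `K` is stable under composition of covers. -/
theorem iCovers_pretopology {X : Type*} (c : Set X → Set X)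
    (hc_empty : c ∅ = ∅)
    (hc_sub : ∀ A : Set X, A ⊆ c A)
    (hc_union : ∀ A B : Set X, c (A ∪ B) = c A ∪ c B) :
    (∀ U : Set X, IsICoverS c U {U}) ∧
    (∀ (U V : Set X) (𝒰 : Set (Set X)), IsICoverS c U 𝒰 → V ⊆ U →
      IsICoverS c V ((fun W => W ∩ V) '' 𝒰)) ∧
    (∀ (U : Set X) (𝒰 : Set (Set X)) (𝒱 : Set X → Set (Set X)),
      IsICoverS c U 𝒰 → (∀ W ∈ 𝒰, IsICoverS c W (𝒱 W)) →
      IsICoverS c U (⋃ W ∈ 𝒰, 𝒱 W)) :=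
  iCovers_pretopology_general c hc_union
end

section
/- Let n ≥ 3 and let G be the cycle graph on the vertex set ZMod n (where k is adjacent to k+1 and k−1 modulo n), with induced closure space (ZMod n, c_G). Then the family 𝒰 = { {k−1, k, k+1} | k ∈ ZMod n } is an interior cover of (ZMod n, c_G), and 𝒰 is maximal with respect to the refinement order: 𝒰 refines every interior cover 𝒱 of (ZMod n, c_G), i.e., for every k there exists V ∈ 𝒱 with {k−1, k, k+1} ⊆ V. -/
/-- An interior cover of a Čech closure space `(X, c)` is a family `𝒰` of subsets of `X`
whose interiors cover `X`. -/
def IsInteriorCover {X : Type*} (c : Set X → Set X) (𝒰 : Set (Set X)) : Prop :=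
  (⋃ U ∈ 𝒰, cInterior c U) = Set.univ

/-- The closure operator on the vertex set induced by a simple graph `G`:
`c_G(A) := A ∪ {w | ∃ v ∈ A, v ~ w}`. -/
def graphClosure {V : Type*} (G : SimpleGraph V) (A : Set V) : Set V :=
  A ∪ {w : V | ∃ v ∈ A, G.Adj v w}

/-! In the closure space of a graph, the interior of `U` consists of the vertices whose closed
neighbourhood lies in `U`. Hence the closed neighbourhoods form an interior cover, and any
interior cover must contain, for each vertex, a set containing its closed neighbourhood.
In the cycle on `ZMod n` the closed neighbourhood of `k` is `{k - 1, k, k + 1}`. -/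

namespace SimpleGraph

variable {V : Type*} (G : SimpleGraph V)

def closedNeighborSet (x : V) : Set V := insert x (G.neighborSet x)

theorem mem_cInterior_graphClosure {U : Set V} {x : V} :
    x ∈ cInterior (graphClosure G) U ↔ G.closedNeighborSet x ⊆ U := by
  rw [closedNeighborSet, Set.insert_subset_iff]
  simp only [cInterior, graphClosure, Set.mem_compl_iff, Set.mem_union, Set.mem_ofPred_eq,
    not_or, not_exists, not_and, not_not]
  refine and_congr_right fun _ => ⟨fun h y hy => ?_, fun h y hy hadj => hy (h hadj.symm)⟩
  by_contra hyU
  exact h y hyU hy.symm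

theorem isInteriorCover_range_closedNeighborSet :
    IsInteriorCover (graphClosure G) (Set.range G.closedNeighborSet) :=
  Set.eq_univ_of_forall fun x => Set.mem_biUnion (Set.mem_range_self x)
    (G.mem_cInterior_graphClosure.mpr subset_rfl)

theorem exists_closedNeighborSet_subset_of_isInteriorCover {𝒱 : Set (Set V)}
    (h𝒱 : IsInteriorCover (graphClosure G) 𝒱) (x : V) :
    ∃ W ∈ 𝒱, G.closedNeighborSet x ⊆ W := by
  obtain ⟨W, hW, hxW⟩ := Set.mem_iUnion₂.mp (h𝒱.symm ▸ Set.mem_univ x)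
  exact ⟨W, hW, G.mem_cInterior_graphClosure.mp hxW⟩

theorem closedNeighborSet_eq_of_adj_iff {n : ℕ} {G : SimpleGraph (ZMod n)}
    (hG : ∀ k l : ZMod n, G.Adj k l ↔ (l = k + 1 ∨ l = k - 1)) (k : ZMod n) :
    G.closedNeighborSet k = {k - 1, k, k + 1} := by
  ext l
  simp only [closedNeighborSet, Set.mem_insert_iff, mem_neighborSet, hG,
    Set.mem_singleton_iff]
  tauto

end SimpleGraph

theorem cycle_interior_cover_general (n : ℕ) (G : SimpleGraph (ZMod n))
    (hG : ∀ k l : ZMod n, G.Adj k l ↔ (l = k + 1 ∨ l = k - 1)) :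
    IsInteriorCover (graphClosure G)
      {W : Set (ZMod n) | ∃ k : ZMod n, W = {k - 1, k, k + 1}} ∧
    (∀ 𝒱 : Set (Set (ZMod n)), IsInteriorCover (graphClosure G) 𝒱 →
      ∀ k : ZMod n, ∃ V ∈ 𝒱, ({k - 1, k, k + 1} : Set (ZMod n)) ⊆ V) := by
  have hrange : {W : Set (ZMod n) | ∃ k : ZMod n, W = {k - 1, k, k + 1}} =
      Set.range G.closedNeighborSet := by
    ext W
    simp only [Set.mem_ofPred_eq, Set.mem_range,
      SimpleGraph.closedNeighborSet_eq_of_adj_iff hG, eq_comm]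
  refine ⟨hrange ▸ G.isInteriorCover_range_closedNeighborSet, fun 𝒱 h𝒱 k => ?_⟩
  simpa only [SimpleGraph.closedNeighborSet_eq_of_adj_iff hG] using
    G.exists_closedNeighborSet_subset_of_isInteriorCover h𝒱 k

/-- For the cycle graph `G` on `ZMod n` (`n ≥ 3`), where `k` is adjacent to `k+1` and
`k-1` modulo `n`, the family `𝒰 = { {k-1, k, k+1} | k ∈ ZMod n }` is an interior cover
of the induced closure space `(ZMod n, c_G)`, and it is maximal in the refinement order:
`𝒰` refines every interior cover `𝒱` of `(ZMod n, c_G)`. -/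
theorem cycle_interior_cover (n : ℕ) (hn : 3 ≤ n) (G : SimpleGraph (ZMod n))
    (hG : ∀ k l : ZMod n, G.Adj k l ↔ (l = k + 1 ∨ l = k - 1)) :
    IsInteriorCover (graphClosure G)
      {W : Set (ZMod n) | ∃ k : ZMod n, W = {k - 1, k, k + 1}} ∧
    (∀ 𝒱 : Set (Set (ZMod n)), IsInteriorCover (graphClosure G) 𝒱 →
      ∀ k : ZMod n, ∃ V ∈ 𝒱, ({k - 1, k, k + 1} : Set (ZMod n)) ⊆ V) :=
  cycle_interior_cover_general n G hG
end
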